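/- arXiv:1904.03809 — 4 statements merged into one kernel-verified Lean document; each statement's English description precedes it below -/
import Mathlib

section
/- There exists a constant C>0 such that for every finite signed regular Borel measure μ on the closed half plane, the function Kμ(x)=∫ ∇⊥_x D(x,y) dμ(y) is a measurable vector field on ℝ²₊ belonging to weak-L², with weak-L² quasinorm bound sup_{λ>0} λ · (volume{x∈ℝ²₊ : |Kμ(x)|>λ})^{1/2} ≤ C‖μ‖_M. -/
open MeasureTheory Real
open scoped ENNReal

noncomputable section

/-- The open upper half plane ℝ²₊ = {x : x₂ > 0}. -/
def upperHalf : Set (ℝ × ℝ) := {x | 0 < x.2}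

/-- 2D heat kernel Γ(x,t) = (4πt)⁻¹ exp(−|x|²/(4t)). -/
def heatK (x : ℝ × ℝ) (t : ℝ) : ℝ :=
  (4 * π * t)⁻¹ * Real.exp (-(x.1 ^ 2 + x.2 ^ 2) / (4 * t))

/-- 1D heat kernel Γ₀(r,t) = (4πt)^{-1/2} exp(−r²/(4t)). -/
def heatK1 (r t : ℝ) : ℝ :=
  (Real.sqrt (4 * π * t))⁻¹ * Real.exp (-r ^ 2 / (4 * t))

/-- ∂²_{z₁} E(z) = (z₁² − z₂²)/(2π|z|⁴), for E(z) = −(2π)⁻¹ log|z|. -/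
def d2E (z : ℝ × ℝ) : ℝ :=
  (z.1 ^ 2 - z.2 ^ 2) / (2 * π * (z.1 ^ 2 + z.2 ^ 2) ^ 2)

/-- Poisson kernel P_s(r) = s/(π(r²+s²)). -/
def Pker (s r : ℝ) : ℝ := s / (π * (r ^ 2 + s ^ 2))

/-- Conjugate Poisson kernel Q_s(r) = r/(π(r²+s²)). -/
def Qker (s r : ℝ) : ℝ := r / (π * (r ^ 2 + s ^ 2))

/-- ∇⊥E(z) = (∂₂E(z), −∂₁E(z)) for E(z) = −(2π)⁻¹ log|z|. -/
def gradPerpE (z : ℝ × ℝ) : ℝ × ℝ :=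
  (-z.2 / (2 * π * (z.1 ^ 2 + z.2 ^ 2)), z.1 / (2 * π * (z.1 ^ 2 + z.2 ^ 2)))

/-- The Biot–Savart kernel ∇⊥_x D(x,y) = ∇⊥E(x−y) − ∇⊥E(x−y*). -/
def bsKernel (x y : ℝ × ℝ) : ℝ × ℝ :=
  gradPerpE (x.1 - y.1, x.2 - y.2) - gradPerpE (x.1 - y.1, x.2 + y.2)

/-- Integral of a real function against a finite signed measure (via Jordan decomposition). -/
def sInt (μ : SignedMeasure (ℝ × ℝ)) (f : ℝ × ℝ → ℝ) : ℝ :=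
  (∫ y, f y ∂μ.toJordanDecomposition.posPart) - ∫ y, f y ∂μ.toJordanDecomposition.negPart

/-- Integral of a vector-valued function against a finite signed measure. -/
def sIntV (μ : SignedMeasure (ℝ × ℝ)) (f : ℝ × ℝ → ℝ × ℝ) : ℝ × ℝ :=
  (∫ y, f y ∂μ.toJordanDecomposition.posPart) - ∫ y, f y ∂μ.toJordanDecomposition.negPart

/-- Total variation norm ‖μ‖_M of a finite signed measure. -/
def normM (μ : SignedMeasure (ℝ × ℝ)) : ℝ := (μ.totalVariation Set.univ).toReal

/-- The vorticity kernel W(x,y,t). -/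
def Wk (x y : ℝ × ℝ) (t : ℝ) : ℝ :=
  heatK (x.1 - y.1, x.2 - y.2) t + heatK (x.1 - y.1, x.2 + y.2) t
    + 4 * ∫ z₂ in (0:ℝ)..y.2, ∫ z₁ : ℝ, heatK (x.1 - z₁, x.2 + z₂) t * d2E (z₁ - y.1, z₂ - y.2)
    - 2 * heatK1 x.2 t * ∫ z₁ : ℝ, heatK1 (x.1 - z₁) t * Pker y.2 (z₁ - y.1)

/-- T(t)ω₀(x) = ∫ W(x,y,t) dω₀(y) for a finite signed measure ω₀. -/
def Tsg (ω₀ : SignedMeasure (ℝ × ℝ)) (t : ℝ) (x : ℝ × ℝ) : ℝ :=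
  sInt ω₀ (fun y => Wk x y t)

/-- The boundary trace operator T₁μ(x₁) = π⁻¹ ∫ y₂/((x₁−y₁)²+y₂²) dμ(y). -/
def T1op (μ : SignedMeasure (ℝ × ℝ)) (x₁ : ℝ) : ℝ :=
  π⁻¹ * sInt μ (fun y => y.2 / ((x₁ - y.1) ^ 2 + y.2 ^ 2))

/-!
For `y` in the closed half plane, `‖∇⊥_x D(x, y)‖ ≤ 1 / dist x y` (sup metric on `ℝ × ℝ`), so
`‖Kμ‖` is dominated by the potential `∫ (dist x y)⁻¹ d|μ|(y)`. Balls of radius `r` have area `4 r²`,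
so summing over dyadic shells gives `∫_{ball y ρ} (dist x y)⁻¹ dx ≤ 16 ρ`, and hence
`∫_E (dist x y)⁻¹ dx ≤ 16 ρ + |E| / ρ` for every set `E`. Integrating `λ ≤ ‖Kμ‖` over
`E = {‖Kμ‖ > λ}`, exchanging the integrals and choosing `ρ = |E|^{1/2}` gives
`λ |E| ≤ 17 |E|^{1/2} ‖μ‖_M`.
-/

open Metric Set
open scoped NNReal

section InverseDistancePotential

variable {X : Type*} [PseudoMetricSpace X] {y : X}

/-- On the dyadic shell `ρ / 2 ^ (n + 1) < dist x y ≤ ρ / 2 ^ n` the `n`-th term alone dominates;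
at distance `0` the sum is `⊤`. -/
lemma inv_edist_le_tsum_indicator {ρ : ℝ} (hρ : 0 < ρ) {x : X} (hx : x ∈ ball y ρ) :
    (edist x y)⁻¹ ≤ ∑' n : ℕ,
      (closedBall y (ρ / 2 ^ n)).indicator (fun _ => ENNReal.ofReal (2 ^ (n + 1) / ρ)) x := by
  rcases (dist_nonneg (x := x) (y := y)).eq_or_lt with hd | hd
  · have hmem (n : ℕ) : x ∈ closedBall y (ρ / 2 ^ n) := by
      rw [mem_closedBall, ← hd]; positivity
    calc (edist x y)⁻¹ ≤ ∑' _ : ℕ, ENNReal.ofReal (2 / ρ) := by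
          rw [ENNReal.tsum_const_eq_top_of_ne_zero (by simpa using hρ)]; exact le_top
      _ ≤ _ := ENNReal.tsum_le_tsum fun n => by
          rw [indicator_of_mem (hmem n)]
          gcongr
          exact le_self_pow₀ one_le_two n.succ_ne_zero
  · obtain ⟨n, hn, hn'⟩ := exists_nat_pow_near ((one_le_div hd).mpr (mem_ball.mp hx).le) one_lt_two
    have hmem : x ∈ closedBall y (ρ / 2 ^ n) := by
      rw [mem_closedBall, le_div_iff₀ (by positivity), mul_comm, ← le_div_iff₀ hd]
      exact hn
    refine le_trans ?_ (ENNReal.le_tsum n)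
    rw [indicator_of_mem hmem, edist_dist, ← ENNReal.ofReal_inv_of_pos hd]
    exact ENNReal.ofReal_le_ofReal (by rw [le_div_iff₀ hρ, inv_mul_eq_div]; exact hn'.le)

variable [MeasurableSpace X] [OpensMeasurableSpace X] {μ : Measure X} {C : ℝ≥0}

lemma setLIntegral_ball_inv_edist_le (hμ : ∀ r > 0, μ (closedBall y r) ≤ C * ENNReal.ofReal r ^ 2)
    {ρ : ℝ} (hρ : 0 < ρ) :
    ∫⁻ x in ball y ρ, (edist x y)⁻¹ ∂μ ≤ 4 * C * ENNReal.ofReal ρ := by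
  have hterm (n : ℕ) : ENNReal.ofReal (2 ^ (n + 1) / ρ) * μ (closedBall y (ρ / 2 ^ n))
      ≤ 2 * C * ENNReal.ofReal ρ * 2⁻¹ ^ n := by
    grw [hμ _ (by positivity)]
    have h : 2 ^ (n + 1) / ρ * (ρ / 2 ^ n) ^ 2 = 2 * ρ * 2⁻¹ ^ n := by
      rw [inv_pow]; field_simp; ring
    rw [← ENNReal.ofReal_pow (by positivity), mul_left_comm, ← ENNReal.ofReal_mul (by positivity),
      h, ENNReal.ofReal_mul (by positivity), ENNReal.ofReal_mul zero_le_two,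
      ENNReal.ofReal_pow (by norm_num), ENNReal.ofReal_inv_of_pos two_pos]
    rw [ENNReal.ofReal_ofNat]
    exact le_of_eq (by ring)
  calc ∫⁻ x in ball y ρ, (edist x y)⁻¹ ∂μ
      ≤ ∫⁻ x, ∑' n : ℕ,
          (closedBall y (ρ / 2 ^ n)).indicator (fun _ => ENNReal.ofReal (2 ^ (n + 1) / ρ)) x ∂μ :=
        (setLIntegral_mono' measurableSet_ball fun x hx => inv_edist_le_tsum_indicator hρ hx).trans
          (setLIntegral_le_lintegral _ _)
    _ = ∑' n : ℕ, ENNReal.ofReal (2 ^ (n + 1) / ρ) * μ (closedBall y (ρ / 2 ^ n)) := by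
        rw [lintegral_tsum fun n => (measurable_const.indicator measurableSet_closedBall).aemeasurable]
        simp only [lintegral_indicator_const measurableSet_closedBall]
    _ ≤ ∑' n : ℕ, 2 * C * ENNReal.ofReal ρ * 2⁻¹ ^ n := ENNReal.tsum_le_tsum hterm
    _ = 4 * C * ENNReal.ofReal ρ := by
        rw [ENNReal.tsum_mul_left, ENNReal.tsum_geometric, ENNReal.one_sub_inv_two, inv_inv]
        ring

lemma setLIntegral_inv_edist_le (hμ : ∀ r > 0, μ (closedBall y r) ≤ C * ENNReal.ofReal r ^ 2)
    {ρ : ℝ} (hρ : 0 < ρ) (E : Set X) :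
    ∫⁻ x in E, (edist x y)⁻¹ ∂μ ≤ 4 * C * ENNReal.ofReal ρ + μ E / ENNReal.ofReal ρ := by
  rw [← lintegral_inter_add_sdiff _ E measurableSet_ball]
  gcongr ?_ + ?_
  · exact (lintegral_mono_set inter_subset_right).trans (setLIntegral_ball_inv_edist_le hμ hρ)
  · calc ∫⁻ x in E \ ball y ρ, (edist x y)⁻¹ ∂μ ≤ ∫⁻ _ in E \ ball y ρ, (ENNReal.ofReal ρ)⁻¹ ∂μ :=
          setLIntegral_mono measurable_const fun x hx => ENNReal.inv_le_inv.mpr <| by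
            rw [edist_dist]; exact ENNReal.ofReal_le_ofReal (not_lt.mp hx.2)
      _ = (ENNReal.ofReal ρ)⁻¹ * μ (E \ ball y ρ) := setLIntegral_const _ _
      _ ≤ μ E / ENNReal.ofReal ρ := by
          rw [ENNReal.div_eq_inv_mul]; gcongr; exact sdiff_subset

variable [SecondCountableTopology X]

lemma ofReal_mul_measure_le_of_le_lintegral_inv_edist
    (hμ : ∀ y, ∀ r > 0, μ (closedBall y r) ≤ C * ENNReal.ofReal r ^ 2) [SFinite μ]
    {ν : Measure X} [SFinite ν] {E : Set X} {l : ℝ}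
    (hE : ∀ x ∈ E, ENNReal.ofReal l ≤ ∫⁻ y, (edist x y)⁻¹ ∂ν) {ρ : ℝ} (hρ : 0 < ρ) :
    ENNReal.ofReal l * μ E ≤ (4 * C * ENNReal.ofReal ρ + μ E / ENNReal.ofReal ρ) * ν univ := by
  have hmeas : Measurable fun p : X × X => (edist p.1 p.2)⁻¹ := measurable_edist.inv
  calc ENNReal.ofReal l * μ E = ∫⁻ _ in E, ENNReal.ofReal l ∂μ := (setLIntegral_const _ _).symm
    _ ≤ ∫⁻ x in E, ∫⁻ y, (edist x y)⁻¹ ∂ν ∂μ := setLIntegral_mono hmeas.lintegral_prod_right hE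
    _ = ∫⁻ y, ∫⁻ x in E, (edist x y)⁻¹ ∂μ ∂ν := lintegral_lintegral_swap hmeas.aemeasurable
    _ ≤ ∫⁻ _, (4 * C * ENNReal.ofReal ρ + μ E / ENNReal.ofReal ρ) ∂ν :=
        lintegral_mono fun y => setLIntegral_inv_edist_le (hμ y) hρ E
    _ = _ := lintegral_const _

/-- The weak-type `(1, 2)` bound for `ν ↦ ∫ (edist · y)⁻¹ dν(y)`: take `ρ = √(μ E)` in the
previous estimate. -/
theorem mul_measure_rpow_half_le_of_le_lintegral_inv_edist
    (hμ : ∀ y, ∀ r > 0, μ (closedBall y r) ≤ C * ENNReal.ofReal r ^ 2) [SFinite μ]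
    {ν : Measure X} [IsFiniteMeasure ν] {E : Set X} {l : ℝ} (hl : 0 ≤ l)
    (hE : ∀ x ∈ E, ENNReal.ofReal l ≤ ∫⁻ y, (edist x y)⁻¹ ∂ν) :
    l * (μ E).toReal ^ (1 / 2 : ℝ) ≤ (4 * C + 1) * (ν univ).toReal := by
  rw [← Real.sqrt_eq_rpow]
  rcases (Real.sqrt_nonneg (μ E).toReal).eq_or_lt with h0 | hρ
  · rw [← h0, mul_zero]; positivity
  set ρ := √(μ E).toReal
  have hV : μ E = ENNReal.ofReal ρ * ENNReal.ofReal ρ := by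
    rw [← ENNReal.ofReal_mul hρ.le, Real.mul_self_sqrt ENNReal.toReal_nonneg,
      ENNReal.ofReal_toReal]
    rintro h; simp [ρ, h] at hρ
  have key := ofReal_mul_measure_le_of_le_lintegral_inv_edist hμ hE hρ
  rw [hV, ENNReal.mul_div_cancel_right (by simpa using hρ) ENNReal.ofReal_ne_top] at key
  have key' : ENNReal.ofReal l * ENNReal.ofReal ρ ≤ (4 * C + 1) * ν univ := by
    rw [← ENNReal.mul_le_mul_iff_left (by simpa using hρ) ENNReal.ofReal_ne_top]
    convert key using 1 <;> ring
  have hC : (4 * C + 1 : ℝ≥0∞).toReal = 4 * C + 1 := by norm_cast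
  simpa [ENNReal.toReal_ofReal, hl, hρ.le, hC] using ENNReal.toReal_mono (by finiteness) key'

end InverseDistancePotential

lemma volume_closedBall_real_prod (y : ℝ × ℝ) (r : ℝ) :
    volume (closedBall y r) = 4 * ENNReal.ofReal r ^ 2 := by
  rw [← closedBall_prod_same, Measure.volume_eq_prod, Measure.prod_prod, Real.volume_closedBall, Real.volume_closedBall,
    ENNReal.ofReal_mul zero_le_two, ENNReal.ofReal_ofNat]
  ring

lemma norm_gradPerpE_le (z : ℝ × ℝ) : ‖gradPerpE z‖ ≤ (2 * π * ‖z‖)⁻¹ := by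
  rcases eq_or_ne z 0 with rfl | hz
  · simp [gradPerpE]
  have hz' : 0 < ‖z‖ := norm_pos_iff.mpr hz
  have hsq : ‖z‖ ^ 2 ≤ z.1 ^ 2 + z.2 ^ 2 := by
    rw [Prod.norm_def, Real.norm_eq_abs, Real.norm_eq_abs]
    rcases le_total |z.1| |z.2| with h | h
    · rw [max_eq_right h, sq_abs]; nlinarith
    · rw [max_eq_left h, sq_abs]; nlinarith
  have hcomp (a : ℝ) (ha : |a| ≤ ‖z‖) :
      ‖a / (2 * π * (z.1 ^ 2 + z.2 ^ 2))‖ ≤ (2 * π * ‖z‖)⁻¹ :=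
    calc ‖a / (2 * π * (z.1 ^ 2 + z.2 ^ 2))‖ = |a| / (2 * π * (z.1 ^ 2 + z.2 ^ 2)) := by
          rw [norm_div, Real.norm_eq_abs, Real.norm_of_nonneg (by positivity)]
      _ ≤ ‖z‖ / (2 * π * ‖z‖ ^ 2) := by gcongr
      _ = (2 * π * ‖z‖)⁻¹ := by field_simp
  rw [Prod.norm_def]
  exact max_le (hcomp _ ((abs_neg z.2).trans_le (norm_snd_le z))) (hcomp _ (norm_fst_le z))

lemma enorm_bsKernel_le {x y : ℝ × ℝ} (hx : 0 ≤ x.2) (hy : 0 ≤ y.2) :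
    ‖bsKernel x y‖ₑ ≤ (edist x y)⁻¹ := by
  rcases eq_or_ne x y with rfl | hxy
  · simp
  have hd : 0 < dist x y := dist_pos.mpr hxy
  have hdist : dist x y = ‖(x.1 - y.1, x.2 - y.2)‖ := dist_eq_norm x y
  have hreflect : dist x y ≤ ‖(x.1 - y.1, x.2 + y.2)‖ := by
    rw [hdist, Prod.norm_def, Prod.norm_def]
    gcongr
    rw [Real.norm_eq_abs, Real.norm_eq_abs, abs_of_nonneg (add_nonneg hx hy)]
    exact abs_le.mpr ⟨by linarith, by linarith⟩
  have hnorm : ‖bsKernel x y‖ ≤ (dist x y)⁻¹ :=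
    calc ‖bsKernel x y‖
        ≤ ‖gradPerpE (x.1 - y.1, x.2 - y.2)‖ + ‖gradPerpE (x.1 - y.1, x.2 + y.2)‖ :=
          norm_sub_le _ _
      _ ≤ (2 * π * dist x y)⁻¹ + (2 * π * dist x y)⁻¹ := by
          gcongr
          · exact hdist ▸ norm_gradPerpE_le _
          · exact (norm_gradPerpE_le _).trans (by gcongr)
      _ = (π * dist x y)⁻¹ := by field_simp; ring
      _ ≤ (dist x y)⁻¹ := by gcongr; exact le_mul_of_one_le_left hd.le (by linarith [pi_gt_three])
  rw [← ofReal_norm, edist_dist, ← ENNReal.ofReal_inv_of_pos hd]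
  exact ENNReal.ofReal_le_ofReal hnorm

lemma enorm_sIntV_le (μ : SignedMeasure (ℝ × ℝ)) (f : ℝ × ℝ → ℝ × ℝ) :
    ‖sIntV μ f‖ₑ ≤ ∫⁻ y, ‖f y‖ₑ ∂μ.totalVariation :=
  calc ‖sIntV μ f‖ₑ
      ≤ ‖∫ y, f y ∂μ.toJordanDecomposition.posPart‖ₑ
        + ‖∫ y, f y ∂μ.toJordanDecomposition.negPart‖ₑ := enorm_sub_le
    _ ≤ _ := add_le_add (enorm_integral_le_lintegral_enorm f) (enorm_integral_le_lintegral_enorm f)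
    _ = _ := by rw [SignedMeasure.totalVariation, lintegral_add_measure]

lemma stronglyMeasurable_sIntV {F : ℝ × ℝ → ℝ × ℝ → ℝ × ℝ}
    (hF : StronglyMeasurable (Function.uncurry F)) (μ : SignedMeasure (ℝ × ℝ)) :
    StronglyMeasurable fun x => sIntV μ (F x) :=
  hF.integral_prod_right.sub hF.integral_prod_right

lemma measurable_bsKernel : Measurable (Function.uncurry bsKernel) := by
  unfold Function.uncurry bsKernel gradPerpE
  fun_prop

/-- The Biot–Savart operator K maps finite signed regular Borel measures on the
closed half plane boundedly into weak-L²(ℝ²₊): Kμ is measurable on ℝ²₊ and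
sup_{λ>0} λ · |{x ∈ ℝ²₊ : |Kμ(x)| > λ}|^{1/2} ≤ C‖μ‖_M. -/
theorem biotSavart_weakL2 :
    ∃ C > (0:ℝ), ∀ μ : SignedMeasure (ℝ × ℝ),
      μ.totalVariation {x : ℝ × ℝ | x.2 < 0} = 0 →
      μ.totalVariation.Regular →
      AEStronglyMeasurable (fun x => sIntV μ (fun y => bsKernel x y)) (volume.restrict upperHalf)
        ∧
      ∀ l > (0:ℝ),
        l * (volume {x | x ∈ upperHalf ∧ l < ‖sIntV μ (fun y => bsKernel x y)‖}).toReal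
              ^ ((1:ℝ)/2)
          ≤ C * normM μ := by
  refine ⟨17, by norm_num, fun μ hμ _ => ⟨?_, fun l hl => ?_⟩⟩
  · exact (stronglyMeasurable_sIntV measurable_bsKernel.stronglyMeasurable μ).aestronglyMeasurable
  have hsupp : ∀ᵐ y ∂μ.totalVariation, 0 ≤ y.2 := by
    simpa [ae_iff] using hμ
  have hK : ∀ x ∈ {x | x ∈ upperHalf ∧ l < ‖sIntV μ (fun y => bsKernel x y)‖},
      ENNReal.ofReal l ≤ ∫⁻ y, (edist x y)⁻¹ ∂μ.totalVariation := by
    rintro x ⟨hx, hlx⟩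
    calc ENNReal.ofReal l ≤ ‖sIntV μ (fun y => bsKernel x y)‖ₑ := by
          rw [← ofReal_norm]; exact ENNReal.ofReal_le_ofReal hlx.le
      _ ≤ ∫⁻ y, ‖bsKernel x y‖ₑ ∂μ.totalVariation := enorm_sIntV_le μ _
      _ ≤ _ := lintegral_mono_ae (hsupp.mono fun y hy => enorm_bsKernel_le (le_of_lt hx) hy)
  have h := mul_measure_rpow_half_le_of_le_lintegral_inv_edist (C := 4)
    (fun y r _ => (volume_closedBall_real_prod y r).le) hl.le hK
  norm_num at h
  exact h
end
end

section
/- Let t>0 and let φ be a continuously differentiable function on the closed half plane such that φ is bounded and φ and ∂₂φ are integrable on ℝ²₊. Then for every x ∈ ℝ²₊, ∫_{ℝ²₊} (Γ(x−y,t) − Γ(x−y*,t)) ∂_{y₂}φ(y) dy = ∂_{x₂} [ ∫_{ℝ²₊} (Γ(x−y,t) + Γ(x−y*,t)) φ(y) dy ]; in other words, e^{tΔ_D}∂₂φ = ∂₂ e^{tΔ_N}φ, where e^{tΔ_N} and e^{tΔ_D} are the Neumann and Dirichlet heat semigroups on the half plane given by the kernels Γ(x−y,t)±Γ(x−y*,t).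 -/
/-
Differentiating under the integral sign moves `∂ₓ₂` onto the Neumann kernel: the `x₂`-derivative
of the Gaussian is dominated, locally uniformly in `x₂`, by an integrable function, and `φ` is
bounded. The heat kernel factorises as `Γ(a, u) = Γ₀(a) Γ₀(u)`, and
`∂ₓ₂ (Γ₀(x₂ - r) + Γ₀(x₂ + r)) = -∂ᵣ (Γ₀(x₂ - r) - Γ₀(x₂ + r))`, so integrating by parts in `y₂`
on every line `y₁ = const` turns the Neumann kernel against `φ` into the Dirichlet kernel against
`∂₂φ`. There is no boundary term at `y₂ = 0` because the Dirichlet kernel vanishes there.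
-/

open MeasureTheory Real
open scoped ENNReal

noncomputable section

open Filter Set

def dHeatK1 (r t : ℝ) : ℝ := -(r / (2 * t)) * heatK1 r t

section HeatKernel1D

variable {t : ℝ}

theorem heatK_eq_heatK1_mul (ht : 0 ≤ t) (a u : ℝ) : heatK (a, u) t = heatK1 a t * heatK1 u t := by
  have h4 : 0 ≤ 4 * π * t := by positivity
  rw [heatK, heatK1, heatK1, mul_mul_mul_comm, ← mul_inv, Real.mul_self_sqrt h4, ← Real.exp_add]
  ring_nf

theorem heatK1_nonneg (r t : ℝ) : 0 ≤ heatK1 r t := by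
  unfold heatK1; positivity

theorem heatK1_le (ht : 0 ≤ t) (r : ℝ) : heatK1 r t ≤ (√(4 * π * t))⁻¹ := by
  refine mul_le_of_le_one_right (by positivity) (Real.exp_le_one_iff.mpr ?_)
  exact div_nonpos_of_nonpos_of_nonneg (by nlinarith [sq_nonneg r]) (by positivity)

theorem hasDerivAt_heatK1 (r t : ℝ) : HasDerivAt (heatK1 · t) (dHeatK1 r t) r := by
  have hexp : HasDerivAt (fun u => -u ^ 2 / (4 * t)) (-(2 * r) / (4 * t)) r := by
    simpa using (hasDerivAt_pow 2 r).neg.div_const (4 * t)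
  have h : dHeatK1 r t = (√(4 * π * t))⁻¹ * (exp (-r ^ 2 / (4 * t)) * (-(2 * r) / (4 * t))) := by
    simp only [dHeatK1, heatK1]; ring
  rw [h]
  exact hexp.exp.const_mul _

theorem integrable_heatK1 (ht : 0 < t) : Integrable (heatK1 · t) := by
  have h := (integrable_exp_neg_mul_sq (b := (4 * t)⁻¹) (by positivity)).const_mul (√(4 * π * t))⁻¹
  convert h using 3 with r
  simp only [heatK1]; congr 2; ring

theorem integrable_dHeatK1 (ht : 0 < t) : Integrable (dHeatK1 · t) := by
  have h := (integrable_mul_exp_neg_mul_sq (b := (4 * t)⁻¹) (by positivity)).const_mul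
    (-(2 * t)⁻¹ * (√(4 * π * t))⁻¹)
  convert h using 2 with r
  simp only [dHeatK1, heatK1]
  ring_nf

theorem exists_abs_dHeatK1_le (ht : 0 < t) : ∃ C, ∀ u w : ℝ, |u - w| ≤ 1 →
    |dHeatK1 u t| ≤ C * (|w| * exp (-(8 * t)⁻¹ * w ^ 2) + exp (-(8 * t)⁻¹ * w ^ 2)) := by
  refine ⟨(2 * t)⁻¹ * (√(4 * π * t))⁻¹ * exp (4 * t)⁻¹, fun u w h => ?_⟩
  have hu : |u| ≤ |w| + 1 := by
    have := abs_sub_abs_le_abs_sub u w; linarith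
  have hexp : exp (-u ^ 2 / (4 * t)) ≤ exp (4 * t)⁻¹ * exp (-(8 * t)⁻¹ * w ^ 2) := by
    rw [← Real.exp_add, Real.exp_le_exp]
    have : (u - w) ^ 2 ≤ 1 := by rw [← sq_abs]; nlinarith [abs_nonneg (u - w)]
    have hw : w ^ 2 ≤ 2 * u ^ 2 + 2 := by nlinarith [sq_nonneg (u + (u - w))]
    have h8 : (0 : ℝ) < 8 * t := by positivity
    rw [div_eq_mul_inv, show (4 * t)⁻¹ = 2 * (8 * t)⁻¹ by field_simp; ring]
    nlinarith [inv_pos.mpr h8]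
  calc |dHeatK1 u t| = (2 * t)⁻¹ * (√(4 * π * t))⁻¹ * (|u| * exp (-u ^ 2 / (4 * t))) := by
        rw [dHeatK1, heatK1, abs_mul, abs_neg, abs_div, abs_of_pos (by positivity : 0 < 2 * t),
          abs_of_nonneg (by positivity : 0 ≤ (√(4 * π * t))⁻¹ * exp (-u ^ 2 / (4 * t)))]
        ring
    _ ≤ (2 * t)⁻¹ * (√(4 * π * t))⁻¹ *
          ((|w| + 1) * (exp (4 * t)⁻¹ * exp (-(8 * t)⁻¹ * w ^ 2))) := by
        gcongr
    _ = _ := by ring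

end HeatKernel1D

theorem integral_Ioi_reflect_deriv_mul_eq {g g' ψ ψ' : ℝ → ℝ} {C M : ℝ}
    (hg : ∀ r, HasDerivAt g (g' r) r) (hgi : Integrable g) (hg'i : Integrable g')
    (hgC : ∀ r, |g r| ≤ C) (hψ0 : ContinuousWithinAt ψ (Ici 0) 0)
    (hψ : ∀ r ∈ Ioi (0 : ℝ), HasDerivAt ψ (ψ' r) r) (hψM : ∀ r ∈ Ioi (0 : ℝ), |ψ r| ≤ M)
    (hψ'i : IntegrableOn ψ' (Ioi 0)) (c : ℝ) :
    ∫ r in Ioi 0, (g' (c - r) + g' (c + r)) * ψ r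
      = ∫ r in Ioi 0, (g (c - r) - g (c + r)) * ψ' r := by
  set D : ℝ → ℝ := fun r => g (c - r) - g (c + r)
  have hD : ∀ r, HasDerivAt D (-(g' (c - r) + g' (c + r))) r := fun r => by
    rw [neg_add']
    exact ((hg _).comp_const_sub c r).sub ((hg _).comp_const_add c r)
  have hDC : ∀ r, ‖D r‖ ≤ 2 * C := fun r => by
    simp only [D, Real.norm_eq_abs]
    linarith [abs_sub (g (c - r)) (g (c + r)), hgC (c - r), hgC (c + r)]
  have hψm : AEStronglyMeasurable ψ (volume.restrict (Ioi 0)) :=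
    (ContinuousOn.aestronglyMeasurable (fun r hr => (hψ r hr).continuousAt.continuousWithinAt)
      measurableSet_Ioi)
  have hψM' : ∀ᵐ r ∂volume.restrict (Ioi (0 : ℝ)), ‖ψ r‖ ≤ M :=
    ae_restrict_of_forall_mem measurableSet_Ioi hψM
  have hint₁ : IntegrableOn (fun r => (g' (c - r) + g' (c + r)) * ψ r) (Ioi 0) :=
    ((hg'i.comp_sub_left c).add (hg'i.comp_add_left c)).integrableOn.mul_bdd hψm hψM'
  have hint₂ : IntegrableOn (fun r => D r * ψ' r) (Ioi 0) :=
    hψ'i.bdd_mul (continuous_iff_continuousAt.2 fun r => (hD r).continuousAt).aestronglyMeasurable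
      (ae_of_all _ hDC)
  have hDψ : IntegrableOn (fun r => D r * ψ r) (Ioi 0) :=
    ((hgi.comp_sub_left c).sub (hgi.comp_add_left c)).integrableOn.mul_bdd hψm hψM'
  have hderiv : ∀ r ∈ Ioi (0 : ℝ),
      HasDerivAt (fun r => D r * ψ r) (-((g' (c - r) + g' (c + r)) * ψ r) + D r * ψ' r) r :=
    fun r hr => neg_mul (g' (c - r) + g' (c + r)) (ψ r) ▸ (hD r).mul (hψ r hr)
  have hint : IntegrableOn (fun r => -((g' (c - r) + g' (c + r)) * ψ r) + D r * ψ' r) (Ioi 0) :=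
    hint₁.neg.add hint₂
  have hcont : ContinuousWithinAt (fun r => D r * ψ r) (Ici 0) 0 :=
    (hD 0).continuousAt.continuousWithinAt.mul hψ0
  have hFTC := integral_Ioi_of_hasDerivAt_of_tendsto hcont hderiv hint
    (tendsto_zero_of_hasDerivAt_of_integrableOn_Ioi hderiv hint hDψ)
  rw [integral_add (f := fun r => -((g' (c - r) + g' (c + r)) * ψ r)) hint₁.neg hint₂,
    integral_neg] at hFTC
  simp only [D, add_zero, sub_self, zero_mul, sub_zero] at hFTC
  linarith

theorem hasDerivAt_integral_neumannHeat {t : ℝ} (ht : 0 < t) {S : Set (ℝ × ℝ)}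
    {φ : ℝ × ℝ → ℝ} {M : ℝ} (hφm : AEStronglyMeasurable φ (volume.restrict S))
    (hφM : ∀ᵐ y ∂volume.restrict S, ‖φ y‖ ≤ M) (x₁ x₂ : ℝ) :
    IntegrableOn
        (fun y => heatK1 (x₁ - y.1) t * (dHeatK1 (x₂ - y.2) t + dHeatK1 (x₂ + y.2) t) * φ y) S ∧
      HasDerivAt
        (fun s => ∫ y in S, (heatK (x₁ - y.1, s - y.2) t + heatK (x₁ - y.1, s + y.2) t) * φ y)
        (∫ y in S, heatK1 (x₁ - y.1) t * (dHeatK1 (x₂ - y.2) t + dHeatK1 (x₂ + y.2) t) * φ y)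
        x₂ := by
  obtain ⟨C, hC⟩ := exists_abs_dHeatK1_le ht
  set b : ℝ → ℝ := fun w => C * (|w| * exp (-(8 * t)⁻¹ * w ^ 2) + exp (-(8 * t)⁻¹ * w ^ 2))
  have h8 : 0 < (8 * t)⁻¹ := by positivity
  have hb : Integrable b := by
    refine (Integrable.add ?_ (integrable_exp_neg_mul_sq h8)).const_mul C
    simpa only [norm_mul, Real.norm_eq_abs, abs_exp] using (integrable_mul_exp_neg_mul_sq h8).norm
  have hprod : ∀ f : ℝ → ℝ, Integrable f →
      Integrable (fun y : ℝ × ℝ => heatK1 (x₁ - y.1) t * (f (x₂ - y.2) + f (x₂ + y.2))) :=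
    fun f hf => by
      rw [Measure.volume_eq_prod]
      exact ((integrable_heatK1 ht).comp_sub_left x₁).mul_prod
        ((hf.comp_sub_left x₂).add (hf.comp_add_left x₂))
  simp_rw [heatK_eq_heatK1_mul ht.le, ← mul_add]
  refine hasDerivAt_integral_of_dominated_loc_of_deriv_le (μ := volume.restrict S)
    (F := fun s y => heatK1 (x₁ - y.1) t * (heatK1 (s - y.2) t + heatK1 (s + y.2) t) * φ y)
    (F' := fun s y => heatK1 (x₁ - y.1) t * (dHeatK1 (s - y.2) t + dHeatK1 (s + y.2) t) * φ y)
    (bound := fun y => heatK1 (x₁ - y.1) t * (b (x₂ - y.2) + b (x₂ + y.2)) * M)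
    (Metric.ball_mem_nhds x₂ one_pos) (x₀ := x₂)
    (Eventually.of_forall fun s => ?_)
    ((hprod _ (integrable_heatK1 ht)).integrableOn.mul_bdd hφm hφM) ?_ ?_
    ((hprod b hb).mul_const M).integrableOn ?_
  · exact (Continuous.aestronglyMeasurable (by unfold heatK1; fun_prop)).mul hφm
  · exact (Continuous.aestronglyMeasurable (by unfold dHeatK1 heatK1; fun_prop)).mul hφm
  · filter_upwards [hφM] with y hy s hs
    have hs' : |s - x₂| ≤ 1 := (Metric.mem_ball.mp hs).le
    have h₁ := hC (s - y.2) (x₂ - y.2) (by rwa [sub_sub_sub_cancel_right])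
    have h₂ := hC (s + y.2) (x₂ + y.2) (by rwa [add_sub_add_right_eq_sub])
    rw [norm_mul, norm_mul, Real.norm_eq_abs, Real.norm_eq_abs,
      abs_of_nonneg (heatK1_nonneg _ _)]
    have hM : 0 ≤ M := (norm_nonneg _).trans hy
    calc _ ≤ heatK1 (x₁ - y.1) t * |dHeatK1 (s - y.2) t + dHeatK1 (s + y.2) t| * M :=
          mul_le_mul_of_nonneg_left hy (mul_nonneg (heatK1_nonneg _ _) (abs_nonneg _))
      _ ≤ _ := mul_le_mul_of_nonneg_right (mul_le_mul_of_nonneg_left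
          ((abs_add_le _ _).trans (add_le_add h₁ h₂)) (heatK1_nonneg _ _)) hM
  · refine ae_of_all _ fun y s _ => ?_
    exact ((((hasDerivAt_heatK1 _ t).comp_sub_const s _).add
      ((hasDerivAt_heatK1 _ t).comp_add_const s _)).const_mul _).mul_const _

theorem isOpen_upperHalf : IsOpen upperHalf := isOpen_lt continuous_const continuous_snd

theorem restrict_upperHalf_eq_prod :
    volume.restrict upperHalf = (volume : Measure ℝ).prod (volume.restrict (Ioi 0)) := by
  rw [show upperHalf = univ ×ˢ Ioi 0 by ext; simp [upperHalf], Measure.volume_eq_prod,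
    ← Measure.prod_restrict, Measure.restrict_univ]

theorem integral_neumannDeriv_eq_dirichlet_integral {t : ℝ} (ht : 0 < t) {φ : ℝ × ℝ → ℝ} {M : ℝ}
    (hφc : ContinuousOn φ {x | 0 ≤ x.2}) (hφd : DifferentiableOn ℝ φ upperHalf)
    (hφM : ∀ x ∈ upperHalf, |φ x| ≤ M)
    (hφ' : IntegrableOn (fun y => fderiv ℝ φ y (0, 1)) upperHalf) (x₁ x₂ : ℝ)
    (hN : IntegrableOn
      (fun y => heatK1 (x₁ - y.1) t * (dHeatK1 (x₂ - y.2) t + dHeatK1 (x₂ + y.2) t) * φ y)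
      upperHalf) :
    ∫ y in upperHalf, heatK1 (x₁ - y.1) t * (dHeatK1 (x₂ - y.2) t + dHeatK1 (x₂ + y.2) t) * φ y
      = ∫ y in upperHalf, (heatK (x₁ - y.1, x₂ - y.2) t - heatK (x₁ - y.1, x₂ + y.2) t)
          * fderiv ℝ φ y (0, 1) := by
  have hG : ∀ r, |heatK1 r t| ≤ (√(4 * π * t))⁻¹ := fun r =>
    (abs_of_nonneg (heatK1_nonneg r t)).trans_le (heatK1_le ht.le r)
  simp_rw [heatK_eq_heatK1_mul ht.le, ← mul_sub]
  have hD : IntegrableOn (fun y => heatK1 (x₁ - y.1) t * (heatK1 (x₂ - y.2) t - heatK1 (x₂ + y.2) t)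
      * fderiv ℝ φ y (0, 1)) upperHalf := by
    refine hφ'.bdd_mul (c := (√(4 * π * t))⁻¹ * (√(4 * π * t))⁻¹)
      (Continuous.aestronglyMeasurable (by unfold heatK1; fun_prop)) (ae_of_all _ fun y => ?_)
    rw [norm_mul, Real.norm_eq_abs, Real.norm_eq_abs]
    exact mul_le_mul (hG _) (abs_sub_le_of_nonneg_of_le (heatK1_nonneg _ _) (heatK1_le ht.le _)
      (heatK1_nonneg _ _) (heatK1_le ht.le _)) (abs_nonneg _) (by positivity)
  rw [IntegrableOn, restrict_upperHalf_eq_prod] at hN hD hφ'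
  rw [restrict_upperHalf_eq_prod, integral_prod _ hN, integral_prod _ hD]
  refine integral_congr_ae ?_
  filter_upwards [hφ'.prod_right_ae] with y₁ hslice
  simp_rw [mul_assoc, integral_const_mul]
  congr 1
  refine integral_Ioi_reflect_deriv_mul_eq (hasDerivAt_heatK1 · t) (integrable_heatK1 ht)
    (integrable_dHeatK1 ht) hG ?_ (fun r hr => ?_) (fun r hr => hφM _ hr) hslice x₂
  · exact (hφc.comp (Continuous.prodMk_right y₁).continuousOn fun r hr => hr).continuousWithinAt
      self_mem_Ici
  · have hdiff : DifferentiableAt ℝ φ (y₁, r) :=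
      (hφd _ hr).differentiableAt (isOpen_upperHalf.mem_nhds hr)
    exact hdiff.hasFDerivAt.comp_hasDerivAt r ((hasDerivAt_const r y₁).prodMk (hasDerivAt_id r))

theorem dirichlet_neumann_commute_general (t : ℝ) (ht : 0 < t) (φ : ℝ × ℝ → ℝ)
    (hφ : ContDiffOn ℝ 1 φ {x : ℝ × ℝ | 0 ≤ x.2})
    (hbd : ∃ M, ∀ x : ℝ × ℝ, 0 ≤ x.2 → |φ x| ≤ M)
    (hint2 : IntegrableOn (fun y => fderiv ℝ φ y (0, 1)) upperHalf) :
    ∀ x ∈ upperHalf,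
      HasDerivAt
        (fun s => ∫ y in upperHalf,
          (heatK (x.1 - y.1, s - y.2) t + heatK (x.1 - y.1, s + y.2) t) * φ y)
        (∫ y in upperHalf,
          (heatK (x.1 - y.1, x.2 - y.2) t - heatK (x.1 - y.1, x.2 + y.2) t)
            * fderiv ℝ φ y (0, 1))
        x.2 := by
  intro x _
  obtain ⟨M, hM⟩ := hbd
  have hM' : ∀ y ∈ upperHalf, |φ y| ≤ M := fun y hy => hM y (le_of_lt hy)
  have hUH : MeasurableSet upperHalf := isOpen_upperHalf.measurableSet
  have hsub : upperHalf ⊆ {x : ℝ × ℝ | 0 ≤ x.2} := fun y (hy : 0 < y.2) => hy.le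
  obtain ⟨hN, hderiv⟩ := hasDerivAt_integral_neumannHeat ht
    ((hφ.continuousOn.mono hsub).aestronglyMeasurable hUH)
    (ae_restrict_of_forall_mem hUH hM') x.1 x.2
  rwa [integral_neumannDeriv_eq_dirichlet_integral ht hφ.continuousOn
    ((hφ.differentiableOn one_ne_zero).mono hsub) hM' hint2 x.1 x.2 hN]
    at hderiv

/-- e^{tΔ_D}∂₂φ = ∂₂ e^{tΔ_N}φ, i.e. for x ∈ ℝ²₊ the x₂-derivative of the
Neumann heat extension of φ exists and equals the Dirichlet heat extension of ∂₂φ. -/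
theorem dirichlet_neumann_commute (t : ℝ) (ht : 0 < t) (φ : ℝ × ℝ → ℝ)
    (hφ : ContDiffOn ℝ 1 φ {x : ℝ × ℝ | 0 ≤ x.2})
    (hbd : ∃ M, ∀ x : ℝ × ℝ, 0 ≤ x.2 → |φ x| ≤ M)
    (hint : IntegrableOn φ upperHalf)
    (hint2 : IntegrableOn (fun y => fderiv ℝ φ y (0, 1)) upperHalf) :
    ∀ x ∈ upperHalf,
      HasDerivAt
        (fun s => ∫ y in upperHalf,
          (heatK (x.1 - y.1, s - y.2) t + heatK (x.1 - y.1, s + y.2) t) * φ y)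
        (∫ y in upperHalf,
          (heatK (x.1 - y.1, x.2 - y.2) t - heatK (x.1 - y.1, x.2 + y.2) t)
            * fderiv ℝ φ y (0, 1))
        x.2 :=
  dirichlet_neumann_commute_general t ht φ hφ hbd hint2

end
end

section
/- Define W*(x,y,t) = Γ(x−y*,t) + 4∫₀^{y₂}∫_ℝ Γ(x−z*,t) ∂²_{z₁}E(z−y) dz₁ dz₂ and G*₁₁(x,z,t) = −Γ(x−z*,t) − 4∫₀^{x₂}∫_ℝ ∂²_{x₁}E(x−w) Γ(w−z*,t) dw₁ dw₂ (the (1,1)-entry of the remainder part of the Green matrix of the Stokes semigroup in the half plane). Then for all x,y ∈ ℝ²₊ and t>0, W*(x,y,t) = −G*₁₁(y,x,t). -/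
open MeasureTheory Real
open scoped ENNReal

noncomputable section

/-- W*(x,y,t) = Γ(x−y*,t) + 4∫₀^{y₂}∫_ℝ Γ(x−z*,t) ∂²_{z₁}E(z−y) dz. -/
def Wstar (x y : ℝ × ℝ) (t : ℝ) : ℝ :=
  heatK (x.1 - y.1, x.2 + y.2) t
    + 4 * ∫ z₂ in (0:ℝ)..y.2, ∫ z₁ : ℝ, heatK (x.1 - z₁, x.2 + z₂) t * d2E (z₁ - y.1, z₂ - y.2)

/-- G*₁₁(x,z,t) = −Γ(x−z*,t) − 4∫₀^{x₂}∫_ℝ ∂²_{x₁}E(x−w) Γ(w−z*,t) dw, the (1,1)-entry of the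
remainder part of the Green matrix of the Stokes semigroup. -/
def Gstar11 (x z : ℝ × ℝ) (t : ℝ) : ℝ :=
  -heatK (x.1 - z.1, x.2 + z.2) t
    - 4 * ∫ w₂ in (0:ℝ)..x.2, ∫ w₁ : ℝ, d2E (x.1 - w₁, x.2 - w₂) * heatK (w₁ - z.1, w₂ + z.2) t

/-- W*(x,y,t) = −G*₁₁(y,x,t). -/
theorem Wstar_eq_neg_Gstar11 :
    ∀ x ∈ upperHalf, ∀ y ∈ upperHalf, ∀ t > (0:ℝ), Wstar x y t = -Gstar11 y x t := by
  intro x hx y hy t ht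
  unfold Wstar Gstar11
  have hfun : ∀ z₂ z₁ : ℝ, heatK (x.1 - z₁, x.2 + z₂) t * d2E (z₁ - y.1, z₂ - y.2)
      = d2E (y.1 - z₁, y.2 - z₂) * heatK (z₁ - x.1, z₂ + x.2) t := by
    intro z₂ z₁
    simp only [heatK, d2E]
    ring_nf
  have hA : heatK (x.1 - y.1, x.2 + y.2) t = heatK (y.1 - x.1, y.2 + x.2) t := by
    simp only [heatK]
    ring_nf
  simp only [hfun, hA]
  ring

end
end

section
/- Let μ ∈ L¹(ℝ²) with ∫_{ℝ²} μ(x) dx = 0. Then the heat semigroup applied to μ decays in L¹ at infinity in time: lim_{t→∞} ∫_{ℝ²} | ∫_{ℝ²} Γ(x−y,t) μ(y) dy | dx = 0. -/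
/-! Since `μ` has zero mass, `e^{tΔ}μ(x) = ∫ (Γ(x - y, t) - Γ(x, t)) μ(y) dy`, hence
`‖e^{tΔ}μ‖₁ ≤ ∫ ‖Γ(· - y, t) - Γ(·, t)‖₁ |μ(y)| dy`. By parabolic scaling the inner norm equals
`‖Γ(· - y/√t, 1) - Γ(·, 1)‖₁`, which is at most `2` and tends to `0` as `t → ∞` by continuity of
translation in `L¹` (dominated convergence against the wider Gaussian `Γ(·, 2)`); dominated
convergence in `y` concludes. -/

open MeasureTheory Real
open scoped ENNReal

noncomputable section

open Filter Topology

section ZeroMass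

variable {G : Type*} [AddGroup G] [MeasurableSpace G] {ν : Measure G} [ν.IsAddRightInvariant]
  {K μ : G → ℝ}

theorem integral_abs_sub_translate_le [MeasurableAdd G] (hK : Integrable K ν) (v : G) :
    ∫ x, |K (x - v) - K x| ∂ν ≤ 2 * ∫ x, |K x| ∂ν := by
  calc ∫ x, |K (x - v) - K x| ∂ν ≤ ∫ x, (|K (x - v)| + |K x|) ∂ν :=
        integral_mono_of_nonneg (.of_forall fun _ => abs_nonneg _)
          ((hK.comp_sub_right v).abs.add hK.abs) (.of_forall fun _ => abs_sub _ _)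
    _ = 2 * ∫ x, |K x| ∂ν := by
        rw [integral_add (hK.comp_sub_right v).abs hK.abs,
          integral_sub_right_eq_self (fun x => |K x|) v, two_mul]

theorem integral_abs_convolution_le_of_integral_eq_zero [MeasurableAdd₂ G] [MeasurableNeg G]
    [SFinite ν] (hK : Integrable K ν) (hμ : Integrable μ ν) (h0 : ∫ y, μ y ∂ν = 0) :
    ∫ x, |∫ y, K (x - y) * μ y ∂ν| ∂ν ≤ ∫ y, (∫ x, |K (x - y) - K x| ∂ν) * |μ y| ∂ν := by
  have hconv : Integrable (fun p : G × G => K (p.1 - p.2) * μ p.2) (ν.prod ν) := by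
    simpa [mul_comm] using hμ.convolution_integrand (ContinuousLinearMap.mul ℝ ℝ) hK
  have hdiff : Integrable (fun p : G × G => (K (p.1 - p.2) - K p.1) * μ p.2) (ν.prod ν) :=
    (hconv.sub (hK.mul_prod hμ)).congr (.of_forall fun p => (sub_mul _ _ _).symm)
  have hpoint (x : G) :
      |∫ y, K (x - y) * μ y ∂ν| ≤ ∫ y, |(K (x - y) - K x) * μ y| ∂ν := by
    by_cases hx : Integrable (fun y => K (x - y) * μ y) ν
    · have : ∫ y, K (x - y) * μ y ∂ν = ∫ y, (K (x - y) - K x) * μ y ∂ν := by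
        simp_rw [sub_mul]
        rw [integral_sub hx (hμ.const_mul _), integral_const_mul, h0, mul_zero, sub_zero]
      rw [this]
      exact abs_integral_le_integral_abs
    · rw [integral_undef hx, abs_zero]
      exact integral_nonneg fun _ => abs_nonneg _
  calc ∫ x, |∫ y, K (x - y) * μ y ∂ν| ∂ν
      ≤ ∫ x, ∫ y, |(K (x - y) - K x) * μ y| ∂ν ∂ν :=
        integral_mono_of_nonneg (.of_forall fun _ => abs_nonneg _)
          hdiff.integral_norm_prod_left (.of_forall hpoint)
    _ = ∫ y, ∫ x, |(K (x - y) - K x) * μ y| ∂ν ∂ν := integral_integral_swap hdiff.abs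
    _ = ∫ y, (∫ x, |K (x - y) - K x| ∂ν) * |μ y| ∂ν := by
        simp_rw [abs_mul, integral_mul_const]

end ZeroMass

theorem tendsto_integral_comp_smul_mul_abs {ι E : Type*} [NormedAddCommGroup E] [NormedSpace ℝ E]
    [MeasurableSpace E] [BorelSpace E] {ν : Measure E} {l : Filter ι} [l.IsCountablyGenerated]
    {ω μ : E → ℝ} {s : ι → ℝ} {C : ℝ} (hω : Measurable ω) (hωC : ∀ v, ‖ω v‖ ≤ C)
    (hω0 : Tendsto ω (𝓝 0) (𝓝 0)) (hs : Tendsto s l (𝓝 0)) (hμ : Integrable μ ν) :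
    Tendsto (fun i => ∫ y, ω (s i • y) * |μ y| ∂ν) l (𝓝 0) := by
  have hlim (y : E) : Tendsto (fun i => ω (s i • y) * |μ y|) l (𝓝 0) := by
    simpa using (hω0.comp (by simpa using hs.smul_const y)).mul_const |μ y|
  simpa using tendsto_integral_filter_of_dominated_convergence
    (F := fun i y => ω (s i • y) * |μ y|) (fun y => C * ‖μ y‖)
    (.of_forall fun i => (hω.comp (measurable_const_smul (s i))).aestronglyMeasurable.mul
      hμ.abs.1)
    (.of_forall fun i => .of_forall fun y => by
      rw [norm_mul, norm_abs_eq_norm]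
      exact mul_le_mul_of_nonneg_right (hωC _) (norm_nonneg _))
    (hμ.norm.const_mul C) (.of_forall hlim)

section HeatKernel

theorem continuous_heatK (t : ℝ) : Continuous fun x : ℝ × ℝ => heatK x t := by
  unfold heatK; fun_prop

variable {t : ℝ}

theorem heatK_nonneg (x : ℝ × ℝ) (ht : 0 ≤ t) : 0 ≤ heatK x t := by
  unfold heatK; positivity

theorem heatK_eq_mul_exp_mul_exp (x : ℝ × ℝ) :
    heatK x t =
      (4 * π * t)⁻¹ * (exp (-(4 * t)⁻¹ * x.1 ^ 2) * exp (-(4 * t)⁻¹ * x.2 ^ 2)) := by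
  rw [heatK, ← exp_add]
  ring_nf

theorem integrable_heatK (ht : 0 < t) : Integrable fun x : ℝ × ℝ => heatK x t := by
  have hb : 0 < (4 * t)⁻¹ := by positivity
  have hprod := (integrable_exp_neg_mul_sq hb).mul_prod (integrable_exp_neg_mul_sq hb)
  rw [← Measure.volume_eq_prod] at hprod
  exact (hprod.const_mul _).congr (.of_forall fun x => (heatK_eq_mul_exp_mul_exp x).symm)

theorem integral_heatK (ht : 0 < t) : ∫ x : ℝ × ℝ, heatK x t = 1 := by
  simp_rw [heatK_eq_mul_exp_mul_exp]
  rw [integral_const_mul, Measure.volume_eq_prod,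
    integral_prod_mul (fun a => exp (-(4 * t)⁻¹ * a ^ 2)) (fun a => exp (-(4 * t)⁻¹ * a ^ 2)),
    integral_gaussian, mul_self_sqrt (by positivity)]
  field_simp

theorem integral_abs_heatK (ht : 0 < t) : ∫ x : ℝ × ℝ, |heatK x t| = 1 := by
  simp_rw [abs_of_nonneg (heatK_nonneg _ ht.le)]
  exact integral_heatK ht

theorem heatK_eq_inv_mul_heatK_one (x : ℝ × ℝ) (ht : 0 < t) :
    heatK x t = t⁻¹ * heatK ((√t)⁻¹ • x) 1 := by
  have hst : √t ^ 2 = t := sq_sqrt ht.le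
  simp only [heatK, Prod.smul_fst, Prod.smul_snd, smul_eq_mul, mul_pow, inv_pow, hst]
  field_simp

theorem integral_abs_heatK_sub_translate_eq (y : ℝ × ℝ) (ht : 0 < t) :
    ∫ x : ℝ × ℝ, |heatK (x - y) t - heatK x t| =
      ∫ z : ℝ × ℝ, |heatK (z - (√t)⁻¹ • y) 1 - heatK z 1| := by
  have hscale (x : ℝ × ℝ) : |heatK (x - y) t - heatK x t| =
      t⁻¹ * |heatK ((√t)⁻¹ • x - (√t)⁻¹ • y) 1 - heatK ((√t)⁻¹ • x) 1| := by
    rw [heatK_eq_inv_mul_heatK_one _ ht, heatK_eq_inv_mul_heatK_one x ht, ← mul_sub, abs_mul,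
      abs_of_pos (inv_pos.2 ht), smul_sub]
  simp_rw [hscale]
  rw [integral_const_mul, Measure.integral_comp_inv_smul_of_nonneg volume
    (fun z => |heatK (z - (√t)⁻¹ • y) 1 - heatK z 1|) (sqrt_nonneg t)]
  simp [Module.finrank_prod, sq_sqrt ht.le, ht.ne']

theorem heatK_one_sub_le {v : ℝ × ℝ} (hv : ‖v‖ ≤ 1) (z : ℝ × ℝ) :
    heatK (z - v) 1 ≤ 2 * exp (1 / 2) * heatK z 2 := by
  have hv₁ : v.1 ^ 2 ≤ 1 := by
    simpa using pow_le_one₀ (abs_nonneg v.1) ((norm_fst_le v).trans hv) (n := 2)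
  have hv₂ : v.2 ^ 2 ≤ 1 := by
    simpa using pow_le_one₀ (abs_nonneg v.2) ((norm_snd_le v).trans hv) (n := 2)
  have hexp : exp (-((z - v).1 ^ 2 + (z - v).2 ^ 2) / (4 * 1)) ≤
      exp (1 / 2) * exp (-(z.1 ^ 2 + z.2 ^ 2) / (4 * 2)) := by
    rw [← exp_add, exp_le_exp, Prod.fst_sub, Prod.snd_sub]
    -- `(a - b)² ≥ a² / 2 - b²` in each coordinate
    nlinarith [sq_nonneg (z.1 - 2 * v.1), sq_nonneg (z.2 - 2 * v.2)]
  calc heatK (z - v) 1 ≤ (4 * π * 1)⁻¹ * (exp (1 / 2) * exp (-(z.1 ^ 2 + z.2 ^ 2) / (4 * 2))) :=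
        mul_le_mul_of_nonneg_left hexp (by positivity)
    _ = 2 * exp (1 / 2) * heatK z 2 := by
        rw [heatK]; field_simp

theorem tendsto_integral_abs_heatK_sub_translate :
    Tendsto (fun v => ∫ z : ℝ × ℝ, |heatK (z - v) 1 - heatK z 1|) (𝓝 0) (𝓝 0) := by
  have hcont (z : ℝ × ℝ) : Continuous fun v => |heatK (z - v) 1 - heatK z 1| := by
    have := continuous_heatK 1; fun_prop
  have hbound : ∀ᶠ v : ℝ × ℝ in 𝓝 0, ∀ z : ℝ × ℝ,
      ‖|heatK (z - v) 1 - heatK z 1|‖ ≤ 2 * exp (1 / 2) * heatK z 2 + heatK z 1 := by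
    filter_upwards [Metric.closedBall_mem_nhds (0 : ℝ × ℝ) one_pos] with v hv z
    rw [mem_closedBall_zero_iff] at hv
    rw [Real.norm_eq_abs, abs_abs]
    refine (abs_sub _ _).trans ?_
    rw [abs_of_nonneg (heatK_nonneg _ zero_le_one), abs_of_nonneg (heatK_nonneg _ zero_le_one)]
    gcongr
    exact heatK_one_sub_le hv z
  simpa using tendsto_integral_filter_of_dominated_convergence (f := fun _ => 0) _
    (.of_forall fun v => (((continuous_heatK 1).comp (continuous_id.sub continuous_const)).sub
      (continuous_heatK 1)).abs.aestronglyMeasurable)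
    (hbound.mono fun v hv => .of_forall hv)
    (((integrable_heatK two_pos).const_mul _).add (integrable_heatK one_pos))
    (.of_forall fun z => by simpa using (hcont z).tendsto 0)

theorem measurable_integral_abs_heatK_sub_translate :
    Measurable fun v : ℝ × ℝ => ∫ z : ℝ × ℝ, |heatK (z - v) 1 - heatK z 1| := by
  have := continuous_heatK 1
  refine (StronglyMeasurable.integral_prod_right'
    (f := fun p : (ℝ × ℝ) × (ℝ × ℝ) => |heatK (p.2 - p.1) 1 - heatK p.2 1|) ?_).measurable
  exact Continuous.stronglyMeasurable (by fun_prop)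

theorem tendsto_integral_abs_heatK_sub_translate_mul_abs {μ : ℝ × ℝ → ℝ} (hμ : Integrable μ) :
    Tendsto (fun t => ∫ y : ℝ × ℝ, (∫ x : ℝ × ℝ, |heatK (x - y) t - heatK x t|) * |μ y|)
      atTop (𝓝 0) := by
  have hbound (v : ℝ × ℝ) : ‖∫ z : ℝ × ℝ, |heatK (z - v) 1 - heatK z 1|‖ ≤ 2 := by
    rw [Real.norm_of_nonneg (integral_nonneg fun _ => abs_nonneg _)]
    simpa [integral_abs_heatK one_pos] using
      integral_abs_sub_translate_le (integrable_heatK one_pos) v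
  refine (tendsto_integral_comp_smul_mul_abs measurable_integral_abs_heatK_sub_translate hbound
    tendsto_integral_abs_heatK_sub_translate
    (tendsto_inv_atTop_zero.comp tendsto_sqrt_atTop) hμ).congr' ?_
  filter_upwards [eventually_gt_atTop 0] with t ht
  simp_rw [integral_abs_heatK_sub_translate_eq _ ht]
  rfl

end HeatKernel

/-- for μ ∈ L¹(ℝ²) with zero total mass, ‖e^{tΔ}μ‖_{L¹(ℝ²)} → 0 as t → ∞. -/
theorem heat_L1_decay_zero_mass (μ : ℝ × ℝ → ℝ) (hμ : Integrable μ)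
    (h0 : (∫ x : ℝ × ℝ, μ x) = 0) :
    Filter.Tendsto
      (fun t => ∫ x : ℝ × ℝ, |∫ y : ℝ × ℝ, heatK (x.1 - y.1, x.2 - y.2) t * μ y|)
      Filter.atTop (nhds 0) := by
  refine squeeze_zero' (.of_forall fun t => integral_nonneg fun _ => abs_nonneg _) ?_
    (tendsto_integral_abs_heatK_sub_translate_mul_abs hμ)
  filter_upwards [eventually_gt_atTop 0] with t ht
  exact integral_abs_convolution_le_of_integral_eq_zero (integrable_heatK ht) hμ h0

end
end
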